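/- Let G be a (P3 ∪ P2, house)-free graph such that every proper induced subgraph G' of G satisfies χ(G') ≤ 2ω(G'), while χ(G) > 2ω(G), and suppose v1, v2, v3, v4 induce a 2K2 in G with edges v1v2 and v3v4. Let A be the set of vertices outside {v1,v2,v3,v4} with no neighbor in {v1,v2,v3,v4}. If N_{{1,2,3,4}} is a clique and A ≠ ∅, then N_{{1,2}} is almost complete to N_{{1,2,3,4}} and N_{{3,4}} is almost complete to N_{{1,2,3,4}}: in each of N_{{1,2}} and N_{{3,4}}, at most one vertex fails to be adjacent to all vertices of N_{{1,2,3,4}}. -/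

import Mathlib

open SimpleGraph

/-- The disjoint union of a path on 3 vertices and a path on 2 vertices,
with edges `01`, `12` and `34`. -/
def P3uP2 : SimpleGraph (Fin 5) :=
  SimpleGraph.fromEdgeSet {s(0, 1), s(1, 2), s(3, 4)}

/-- The house graph: the complement of the path on 5 vertices. -/
def house : SimpleGraph (Fin 5) := (SimpleGraph.pathGraph 5)ᶜ

/-- `G` has no induced subgraph isomorphic to `H`. -/
def IsInducedFree {V : Type*} {W : Type*} (G : SimpleGraph V) (H : SimpleGraph W) : Prop :=
  IsEmpty (H ↪g G)

/-- The four distinct vertices `v 0, v 1, v 2, v 3` induce a `2K₂` in `G`,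
with edges `v 0 — v 1` and `v 2 — v 3` (here `v 0, v 1, v 2, v 3` play the roles of
`v₁, v₂, v₃, v₄`). -/
def Induces2K2 {V : Type*} (G : SimpleGraph V) (v : Fin 4 → V) : Prop :=
  Function.Injective v ∧ G.Adj (v 0) (v 1) ∧ G.Adj (v 2) (v 3) ∧
  ¬ G.Adj (v 0) (v 2) ∧ ¬ G.Adj (v 0) (v 3) ∧ ¬ G.Adj (v 1) (v 2) ∧ ¬ G.Adj (v 1) (v 3)

/-- `NS G v S` is the set of vertices outside `{v 0, v 1, v 2, v 3}` that are adjacent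
to `v i` exactly for the indices `i ∈ S`. -/
def NS {V : Type*} (G : SimpleGraph V) (v : Fin 4 → V) (S : Finset (Fin 4)) : Set V :=
  {u | (∀ i, u ≠ v i) ∧ ∀ i, G.Adj u (v i) ↔ i ∈ S}

/-- `X` is anticomplete to `Y`: there is no edge between `X` and `Y`. -/
def Anticomplete {V : Type*} (G : SimpleGraph V) (X Y : Set V) : Prop :=
  ∀ x ∈ X, ∀ y ∈ Y, ¬ G.Adj x y

/-- `X` is complete to `Y`: every vertex of `X` is adjacent to every vertex of `Y`. -/
def CompleteTo {V : Type*} (G : SimpleGraph V) (X Y : Set V) : Prop :=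
  ∀ x ∈ X, ∀ y ∈ Y, G.Adj x y

/-!
Fix `a ∈ A`. By `P₃ ∪ P₂`-freeness, `N₁₂` is a clique with no neighbour of `a`. By minimality no
vertex has its neighbourhood inside that of another vertex, as it could take that vertex's colour.
So if `u ∈ N₁₂₃₄` missed `a`, some neighbour `t` of `a` would miss `u`. `P₃ ∪ P₂`- and
house-freeness force `t` to see all of `v₁, …, v₄` or none of them: in the first case `t` lies in
the clique `N₁₂₃₄`, in the second `v₁ - u - v₃` with `a - t` is a `P₃ ∪ P₂`. Hence `a` is complete
to `N₁₂₃₄`. Now let `x ≠ y` in `N₁₂` (adjacent) both miss vertices of `N₁₂₃₄`. A common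
non-neighbour `w ∈ N₁₂₃₄` gives the `P₃ ∪ P₂` `a - w - v₃` with `x - y`; otherwise `x` misses `u`,
`y` misses `u'`, and `y x u' u` with roof `v₃` is a house. Swapping the two edges of the `2K₂`
exchanges `N₁₂` and `N₃₄`.
-/

section

variable {V : Type*} {G : SimpleGraph V} {v : Fin 4 → V} {S : Finset (Fin 4)} {a t u w x y : V}

theorem IsInducedFree.false_of_adj_iff {W : Type*} {H : SimpleGraph W} (h : IsInducedFree G H)
    (f : W → V) (hf : f.Injective) (hadj : ∀ i j, G.Adj (f i) (f j) ↔ H.Adj i j) : False :=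
  h.false ⟨⟨f, hf⟩, hadj _ _⟩

theorem IsInducedFree.false_of_P3uP2 (h : IsInducedFree G P3uP2) {x y z a b : V}
    (hxy : G.Adj x y) (hyz : G.Adj y z) (hab : G.Adj a b) (hne : x ≠ z) (hxz : ¬G.Adj x z)
    (hxa : ¬G.Adj x a) (hxb : ¬G.Adj x b) (hya : ¬G.Adj y a) (hyb : ¬G.Adj y b)
    (hza : ¬G.Adj z a) (hzb : ¬G.Adj z b) : False := by
  have := hxy.ne; have := hyz.ne; have := hab.ne
  have : x ≠ a := by rintro rfl; exact hxb hab
  have : x ≠ b := by rintro rfl; exact hxa hab.symm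
  have : y ≠ a := by rintro rfl; exact hyb hab
  have : y ≠ b := by rintro rfl; exact hya hab.symm
  have : z ≠ a := by rintro rfl; exact hzb hab
  have : z ≠ b := by rintro rfl; exact hza hab.symm
  refine h.false_of_adj_iff ![x, y, z, a, b] (fun i j hij => ?_) (fun i j => ?_)
  · fin_cases i <;> fin_cases j <;> simp_all [eq_comm]
  · fin_cases i <;> fin_cases j <;> simp_all [P3uP2, G.adj_comm]

/-- Otherwise `x t y u` with roof `z` is an induced house. -/
theorem IsInducedFree.adj_of_C4 (h : IsInducedFree G house) {x y z t u : V}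
    (htx : G.Adj t x) (hty : G.Adj t y) (hux : G.Adj u x) (huy : G.Adj u y) (hyz : G.Adj y z)
    (huz : G.Adj u z) (hxy : ¬G.Adj x y) (hxz : ¬G.Adj x z) (htu : ¬G.Adj t u) :
    G.Adj t z := by
  by_contra htz
  have := htx.ne; have := hty.ne; have := hux.ne; have := huy.ne; have := hyz.ne; have := huz.ne
  have : x ≠ y := by rintro rfl; exact hxz hyz
  have : t ≠ u := by rintro rfl; exact htz huz
  have : z ≠ x := by rintro rfl; exact hxy hyz.symm
  have : z ≠ t := by rintro rfl; exact htu huz.symm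
  refine h.false_of_adj_iff ![y, x, z, t, u] (fun i j hij => ?_) (fun i j => ?_)
  · fin_cases i <;> fin_cases j <;> simp_all [eq_comm]
  · fin_cases i <;> fin_cases j <;> simp_all [house, pathGraph_adj, G.adj_comm]

theorem chromaticNumber_le_induce_compl_of_neighborSet_subset {a u : V} (hne : a ≠ u)
    (h : G.neighborSet a ⊆ G.neighborSet u) :
    G.chromaticNumber ≤ (G.induce {a}ᶜ).chromaticNumber := by
  classical
  let f : V → ({a}ᶜ : Set V) := fun w => if hw : w = a then ⟨u, hne.symm⟩ else ⟨w, hw⟩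
  refine chromaticNumber_mono_of_hom ⟨f, fun {w w'} hww' => ?_⟩
  have fold : ∀ {x y}, x = a → y ≠ a → G.Adj x y → (G.induce {a}ᶜ).Adj (f x) (f y) := by
    rintro x y rfl hy hxy
    simpa [f, hy] using h hxy
  by_cases hw : w = a
  · exact fold hw (fun hw' => hww'.ne (hw.trans hw'.symm)) hww'
  by_cases hw' : w' = a
  · exact (fold hw' hw hww'.symm).symm
  simpa [f, hw, hw'] using hww'

theorem not_neighborSet_subset_of_forall_induce_chromaticNumber_le [Finite V]
    (hmin : ∀ s : Set V, s ≠ Set.univ →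
      (G.induce s).chromaticNumber ≤ 2 * ((G.induce s).cliqueNum : ℕ∞))
    (hG : 2 * (G.cliqueNum : ℕ∞) < G.chromaticNumber) {a u : V} (hne : a ≠ u) :
    ¬G.neighborSet a ⊆ G.neighborSet u := fun h =>
  hG.not_ge <| calc
    G.chromaticNumber ≤ (G.induce {a}ᶜ).chromaticNumber :=
      chromaticNumber_le_induce_compl_of_neighborSet_subset hne h
    _ ≤ 2 * ((G.induce {a}ᶜ).cliqueNum : ℕ∞) := hmin _ (by simp)
    _ ≤ 2 * (G.cliqueNum : ℕ∞) := by gcongr; exact G.cliqueNum_induce_le _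

theorem adj_of_mem_NS (hx : x ∈ NS G v S) {i : Fin 4} (hi : i ∈ S) : G.Adj x (v i) :=
  (hx.2 i).2 hi

theorem not_adj_of_mem_NS (hx : x ∈ NS G v S) {i : Fin 4} (hi : i ∉ S) : ¬G.Adj x (v i) :=
  fun h => hi ((hx.2 i).1 h)

theorem mem_NS_empty_iff : x ∈ NS G v ∅ ↔ (∀ i, x ≠ v i) ∧ ∀ i, ¬G.Adj x (v i) := by
  simp [NS]

theorem mem_NS_full_iff : x ∈ NS G v {0, 1, 2, 3} ↔ (∀ i, x ≠ v i) ∧ ∀ i, G.Adj x (v i) := by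
  have : ∀ i : Fin 4, i ∈ ({0, 1, 2, 3} : Finset (Fin 4)) := by decide
  simp [NS, this]

theorem NS_comp_perm (σ : Equiv.Perm (Fin 4)) (S : Finset (Fin 4)) :
    NS G (v ∘ σ) S = NS G v (S.map σ.toEmbedding) := by
  ext x
  simp only [NS, Set.mem_ofPred_eq, Function.comp_apply, Finset.mem_map_equiv]
  rw [σ.forall_congr_right (q := fun j => x ≠ v j),
    σ.forall_congr_left (p := fun i => G.Adj x (v (σ i)) ↔ i ∈ S)]
  simp

namespace Induces2K2

theorem comp_subLeft_one (hv : Induces2K2 G v) : Induces2K2 G (v ∘ Equiv.subLeft 1) := by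
  obtain ⟨hinj, h01, h23, h02, h03, h12, h13⟩ := hv
  exact ⟨hinj.comp (Equiv.injective _), h01.symm, h23.symm, h13, h12, h03, h02⟩

theorem comp_addRight_two (hv : Induces2K2 G v) : Induces2K2 G (v ∘ Equiv.addRight 2) := by
  obtain ⟨hinj, h01, h23, h02, h03, h12, h13⟩ := hv
  exact ⟨hinj.comp (Equiv.injective _), h23, h01, (h02 ·.symm), (h12 ·.symm), (h03 ·.symm),
    (h13 ·.symm)⟩

theorem forall_adj_of_adj_zero (h1 : IsInducedFree G P3uP2) (h2 : IsInducedFree G house)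
    (hv : Induces2K2 G v) (ha : ∀ i, ¬G.Adj a (v i)) (hu : ∀ i, G.Adj u (v i))
    (hta : G.Adj t a) (htu : ¬G.Adj t u) (ht0 : G.Adj t (v 0)) : ∀ i, G.Adj t (v i) := by
  obtain ⟨-, h01, h23, h02, h03, h12, -⟩ := hv
  have ht23 : G.Adj t (v 2) ∨ G.Adj t (v 3) := by
    by_contra! h
    exact h1.false_of_P3uP2 hta.symm ht0 h23 (fun h => ha 1 (h ▸ h01)) (ha 0) (ha 2) (ha 3)
      h.1 h.2 h02 h03
  have ht2 : G.Adj t (v 2) := ht23.elim id fun ht3 =>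
    h2.adj_of_C4 ht0 ht3 (hu 0) (hu 3) h23.symm (hu 2) h03 h02 htu
  have ht3 : G.Adj t (v 3) := h2.adj_of_C4 ht0 ht2 (hu 0) (hu 2) h23 (hu 3) h02 h03 htu
  have ht1 : G.Adj t (v 1) :=
    h2.adj_of_C4 ht2 ht0 (hu 2) (hu 0) h01 (hu 1) (h02 ·.symm) (h12 ·.symm) htu
  intro i
  fin_cases i <;> assumption

theorem forall_adj_of_adj (h1 : IsInducedFree G P3uP2) (h2 : IsInducedFree G house)
    (hv : Induces2K2 G v) (ha : ∀ i, ¬G.Adj a (v i)) (hu : ∀ i, G.Adj u (v i))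
    (hta : G.Adj t a) (htu : ¬G.Adj t u) {i : Fin 4} (hti : G.Adj t (v i)) :
    ∀ j, G.Adj t (v j) := by
  -- the symmetries of the `2K₂` carry `v 0` to any of its four vertices
  have key {v' : Fin 4 → V} (σ : Equiv.Perm (Fin 4)) (hv' : v' = v ∘ σ) (h2k2 : Induces2K2 G v')
      (ht0 : G.Adj t (v' 0)) : ∀ j, G.Adj t (v j) := by
    subst hv'
    exact σ.forall_congr_right.1
      (h2k2.forall_adj_of_adj_zero h1 h2 (fun _ => ha _) (fun _ => hu _) hta htu ht0)
  fin_cases i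
  · exact hv.forall_adj_of_adj_zero h1 h2 ha hu hta htu hti
  · exact key (Equiv.subLeft 1) rfl hv.comp_subLeft_one hti
  · exact key (Equiv.addRight 2) rfl hv.comp_addRight_two hti
  · exact key (Equiv.subLeft 1 |>.trans (Equiv.addRight 2)) rfl
      hv.comp_addRight_two.comp_subLeft_one hti

end Induces2K2

theorem isClique_NS_01 (h1 : IsInducedFree G P3uP2) (hv : Induces2K2 G v) :
    G.IsClique (NS G v {0, 1}) := by
  obtain ⟨-, -, h23, h02, h03, -⟩ := hv
  intro x hx y hy hxy
  by_contra h
  exact h1.false_of_P3uP2 (adj_of_mem_NS hx (i := 0) (by decide))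
    (adj_of_mem_NS hy (by decide)).symm h23 hxy h (not_adj_of_mem_NS hx (by decide))
    (not_adj_of_mem_NS hx (by decide)) h02 h03 (not_adj_of_mem_NS hy (by decide))
    (not_adj_of_mem_NS hy (by decide))

theorem anticomplete_NS_empty_NS_01 (h1 : IsInducedFree G P3uP2) (hv : Induces2K2 G v) :
    Anticomplete G (NS G v ∅) (NS G v {0, 1}) := by
  obtain ⟨-, h01, h23, h02, h03, -⟩ := hv
  intro a ha x hx hax
  rw [mem_NS_empty_iff] at ha
  exact h1.false_of_P3uP2 hax (adj_of_mem_NS hx (i := 0) (by decide)) h23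
    (fun h => ha.2 1 (h ▸ h01)) (ha.2 0) (ha.2 2) (ha.2 3) (not_adj_of_mem_NS hx (by decide))
    (not_adj_of_mem_NS hx (by decide)) h02 h03

theorem completeTo_NS_empty_NS_full [Finite V] (h1 : IsInducedFree G P3uP2)
    (h2 : IsInducedFree G house)
    (hmin : ∀ s : Set V, s ≠ Set.univ →
      (G.induce s).chromaticNumber ≤ 2 * ((G.induce s).cliqueNum : ℕ∞))
    (hG : 2 * (G.cliqueNum : ℕ∞) < G.chromaticNumber) (hv : Induces2K2 G v)
    (hcl : G.IsClique (NS G v {0, 1, 2, 3})) :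
    CompleteTo G (NS G v ∅) (NS G v {0, 1, 2, 3}) := by
  intro a ha u hu
  by_contra hau
  rw [mem_NS_empty_iff] at ha
  have hu' := mem_NS_full_iff.1 hu
  have hne : a ≠ u := by rintro rfl; exact ha.2 0 (hu'.2 0)
  refine not_neighborSet_subset_of_forall_induce_chromaticNumber_le hmin hG hne fun t hat => ?_
  rw [mem_neighborSet] at hat ⊢
  by_contra hut
  by_cases hT : ∃ i, G.Adj t (v i)
  · obtain ⟨i, hti⟩ := hT
    have ht : t ∈ NS G v {0, 1, 2, 3} := mem_NS_full_iff.2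
      ⟨fun i h => ha.2 i (h ▸ hat), hv.forall_adj_of_adj h1 h2 ha.2 hu'.2 hat.symm (hut ·.symm) hti⟩
    exact hut (hcl hu ht fun h => hau (h ▸ hat))
  · push Not at hT
    obtain ⟨hinj, -, -, h02, -⟩ := hv
    exact h1.false_of_P3uP2 (hu'.2 0).symm (hu'.2 2) hat (hinj.ne (by decide)) h02
      (ha.2 0 ·.symm) (hT 0 ·.symm) (hau ·.symm) hut (ha.2 2 ·.symm) (hT 2 ·.symm)

theorem adj_or_adj_of_mem_NS_01 (h1 : IsInducedFree G P3uP2) (hv : Induces2K2 G v)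
    (hx : x ∈ NS G v {0, 1}) (hy : y ∈ NS G v {0, 1}) (hxy : G.Adj x y) (ha : a ∈ NS G v ∅)
    (hw : w ∈ NS G v {0, 1, 2, 3}) (haw : G.Adj a w) : G.Adj x w ∨ G.Adj y w := by
  by_contra! h
  have hA := anticomplete_NS_empty_NS_01 h1 hv a ha
  exact h1.false_of_P3uP2 haw (adj_of_mem_NS hw (i := 2) (by decide)) hxy (ha.1 2)
    (not_adj_of_mem_NS ha (by decide)) (hA x hx) (hA y hy) (h.1 ·.symm) (h.2 ·.symm)
    (not_adj_of_mem_NS hx (by decide) ·.symm) (not_adj_of_mem_NS hy (by decide) ·.symm)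

theorem subsingleton_NS_01_not_complete [Finite V] (h1 : IsInducedFree G P3uP2)
    (h2 : IsInducedFree G house)
    (hmin : ∀ s : Set V, s ≠ Set.univ →
      (G.induce s).chromaticNumber ≤ 2 * ((G.induce s).cliqueNum : ℕ∞))
    (hG : 2 * (G.cliqueNum : ℕ∞) < G.chromaticNumber) (hv : Induces2K2 G v)
    (hcl : G.IsClique (NS G v {0, 1, 2, 3})) (hA : (NS G v ∅).Nonempty) :
    {x ∈ NS G v {0, 1} | ¬ ∀ u ∈ NS G v {0, 1, 2, 3}, G.Adj x u}.Subsingleton := by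
  obtain ⟨a, ha⟩ := hA
  have hcomplete := completeTo_NS_empty_NS_full h1 h2 hmin hG hv hcl a ha
  rintro x ⟨hx, hxu⟩ y ⟨hy, hyu⟩
  by_contra hne
  push Not at hxu hyu
  obtain ⟨u, hu, hxu⟩ := hxu
  obtain ⟨u', hu', hyu'⟩ := hyu
  have hxy := isClique_NS_01 h1 hv hx hy hne
  have hyu : G.Adj y u :=
    (adj_or_adj_of_mem_NS_01 h1 hv hx hy hxy ha hu (hcomplete u hu)).resolve_left hxu
  have hxu' : G.Adj x u' :=
    (adj_or_adj_of_mem_NS_01 h1 hv hx hy hxy ha hu' (hcomplete u' hu')).resolve_right hyu'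
  have huu' : G.Adj u u' := hcl hu hu' fun h => hyu' (h ▸ hyu)
  exact not_adj_of_mem_NS hx (i := 2) (by decide) <| h2.adj_of_C4 hxy hxu' hyu.symm huu'
    (adj_of_mem_NS hu' (by decide)) (adj_of_mem_NS hu (by decide)) hyu'
    (not_adj_of_mem_NS hy (by decide)) hxu

end

theorem N12_N34_almost_complete_to_N1234
    {V : Type*} [Fintype V] (G : SimpleGraph V)
    (h1 : IsInducedFree G P3uP2) (h2 : IsInducedFree G house)
    (hmin : ∀ s : Set V, s ≠ Set.univ →
      (G.induce s).chromaticNumber ≤ 2 * ((G.induce s).cliqueNum : ℕ∞))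
    (hG : 2 * (G.cliqueNum : ℕ∞) < G.chromaticNumber)
    (v : Fin 4 → V) (h2k2 : Induces2K2 G v)
    (hcl : G.IsClique (NS G v {0, 1, 2, 3}))
    (hA : (NS G v ∅).Nonempty) :
    {x ∈ NS G v {0, 1} | ¬ ∀ u ∈ NS G v {0, 1, 2, 3}, G.Adj x u}.Subsingleton ∧
    {x ∈ NS G v {2, 3} | ¬ ∀ u ∈ NS G v {0, 1, 2, 3}, G.Adj x u}.Subsingleton := by
  refine ⟨subsingleton_NS_01_not_complete h1 h2 hmin hG h2k2 hcl hA, ?_⟩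
  have h01 : ({0, 1} : Finset (Fin 4)).map (Equiv.addRight 2).toEmbedding = {2, 3} := by decide
  have hfull : ({0, 1, 2, 3} : Finset (Fin 4)).map (Equiv.addRight 2).toEmbedding =
      {0, 1, 2, 3} := by decide
  have := subsingleton_NS_01_not_complete h1 h2 hmin hG h2k2.comp_addRight_two
    (by rwa [NS_comp_perm, hfull]) (by rwa [NS_comp_perm, Finset.map_empty])
  rwa [NS_comp_perm, NS_comp_perm, h01, hfull] at this
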